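/- Let η ≥ δ and ζ ≥ max(η,α)+δ be integers, let G satisfy conditions (i)–(v), and let 𝒯 be a 1-cleaned (ζ,η)-template array in G with sequence (Y_i,H_i) (1 ≤ i ≤ n). Then for each v ∈ V(𝒯) there are fewer than γ values of i ∈ {1,…,n} such that v has a neighbour in H_i, where γ = (2δτ+1)(2δ+1). -/

import Mathlib

/-- Vertices of the tree `T(δ)`: a handle, δ (1,δ)-brooms and δ (2,δ)-brooms. -/
inductive TVert (δ : ℕ) : Type
  | handle : TVert δ
  | stem1 : Fin δ → TVert δ
  | leaf1 : Fin δ → Fin δ → TVert δ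
  | stem2 : Fin δ → TVert δ
  | end2 : Fin δ → TVert δ
  | leaf2 : Fin δ → Fin δ → TVert δ

/-- The tree `T(δ)`, formed from δ (1,δ)-brooms and δ (2,δ)-brooms by identifying handles. -/
def TGraph (δ : ℕ) : SimpleGraph (TVert δ) :=
  SimpleGraph.fromRel (fun u v =>
    (∃ i, u = TVert.handle ∧ v = TVert.stem1 i) ∨
    (∃ i m, u = TVert.stem1 i ∧ v = TVert.leaf1 i m) ∨
    (∃ j, u = TVert.handle ∧ v = TVert.stem2 j) ∨
    (∃ j, u = TVert.stem2 j ∧ v = TVert.end2 j) ∨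
    (∃ j m, u = TVert.end2 j ∧ v = TVert.leaf2 j m))

/-- `G` is `T(δ)`-free: no induced subgraph of `G` is isomorphic to `T(δ)`. -/
def TdeltaFree (δ : ℕ) {V : Type} (G : SimpleGraph V) : Prop :=
  IsEmpty (SimpleGraph.Embedding (TGraph δ) G)

/-- `N²[v]`: the set of vertices at distance at most 2 from `v`. -/
def Ball2 {V : Type} (G : SimpleGraph V) (v : V) : Set V :=
  {u | u = v ∨ G.Adj v u ∨ ∃ w, G.Adj v w ∧ G.Adj w u}

/-- `χ²(G) ≤ τ`: every ball of radius 2 induces a subgraph of chromatic number at most `τ`. -/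
def ChiTwoLe {V : Type} (G : SimpleGraph V) (τ : ℕ) : Prop :=
  ∀ v : V, (G.induce (Ball2 G v)).chromaticNumber ≤ (τ : ℕ∞)

/-- `X` is matching-covered in `G`. -/
def MatchingCovered {V : Type} (G : SimpleGraph V) (X : Set V) : Prop :=
  ∀ x ∈ X, ∃ y, y ∉ X ∧ G.Adj x y ∧ ∀ x' ∈ X, G.Adj x' y → x' = x

/-- `A` lists the parts of an `(a,b)`-core: `b` pairwise disjoint stable sets of size `a`,
complete to each other. -/
def IsCoreParts {V : Type} (G : SimpleGraph V) (a : ℕ) {b : ℕ} (A : Fin b → Set V) : Prop :=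
  (∀ i, (A i).encard = (a : ℕ∞)) ∧
  (∀ i j, i ≠ j → Disjoint (A i) (A j)) ∧
  (∀ i, ∀ x ∈ A i, ∀ y ∈ A i, ¬ G.Adj x y) ∧
  (∀ i j, i ≠ j → ∀ x ∈ A i, ∀ y ∈ A j, G.Adj x y)

/-- `G` admits an `(a,b)`-core. -/
def HasCore {V : Type} (G : SimpleGraph V) (a b : ℕ) : Prop :=
  ∃ A : Fin b → Set V, IsCoreParts G a A

/-- `v` is dense to the core with parts `A`: `v` is outside the core and has at least `α`
neighbours in each part. -/
def DenseTo {V : Type} (G : SimpleGraph V) (α : ℕ) {b : ℕ} (A : Fin b → Set V) (v : V) : Prop :=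
  v ∉ (⋃ i, A i) ∧ ∀ i, (α : ℕ∞) ≤ (A i ∩ G.neighborSet v).encard

/-- `v` is `η`-mixed on the core with parts `A`. -/
def MixedOn {V : Type} (G : SimpleGraph V) (α η : ℕ) {b : ℕ} (A : Fin b → Set V) (v : V) : Prop :=
  ¬ DenseTo G α A v ∧ ∃ i, (η : ℕ∞) ≤ (A i ∩ G.neighborSet v).encard

/-- Conditions (i)–(v) of the paper, for fixed `τ, α, δ, β, θ`. -/
def Conditions (τ α δ β : ℕ) (θ : ℕ → ℕ) {V : Type} (G : SimpleGraph V) : Prop :=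
  TdeltaFree δ G ∧
  ChiTwoLe G τ ∧
  (∀ X : Set V, MatchingCovered G X → (G.induce X).chromaticNumber ≤ (τ : ℕ∞)) ∧
  (∀ a : ℕ, 1 ≤ a → (θ a : ℕ∞) < G.chromaticNumber → HasCore G a β) ∧
  ¬ HasCore G α (β + 1)

/-- A `(ζ,η)`-template array in `G`: a template sequence `(Y i, Hs i) (i : Fin n)` together
with a set `U`.  `A i` gives the parts of the core `Y i = ⋃ k, A i k`. -/
structure TemplateArray {V : Type} (G : SimpleGraph V) (α β ζ η : ℕ) (n : ℕ) where
  A : Fin n → Fin β → Set V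
  Hs : Fin n → Set V
  U : Set V
  core : ∀ i, IsCoreParts G ζ (A i)
  core_subset : ∀ i, (⋃ k, A i k) ⊆ Hs i
  mixed : ∀ i, ∀ v ∈ Hs i, MixedOn G α η (A i) v
  H_disj : ∀ i j, i ≠ j → Disjoint (Hs i) (Hs j)
  no_edge : ∀ i j : Fin n, i < j → ∀ u ∈ Hs i, ∀ y ∈ (⋃ k, A j k), ¬ G.Adj u y
  not_mixed : ∀ i j : Fin n, i < j → ∀ v ∈ Hs j, ¬ MixedOn G α η (A i) v
  U_not_H : ∀ v ∈ U, ∀ i, v ∉ Hs i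
  U_not_mixed : ∀ v ∈ U, ∀ i, ¬ MixedOn G α η (A i) v
  U_nbr : ∀ v ∈ U, ∃ i, ∃ u ∈ Hs i, G.Adj v u

namespace TemplateArray

variable {V : Type} {G : SimpleGraph V} {α β ζ η n : ℕ}

/-- The core `Y_i` of the template array. -/
def Y (T : TemplateArray G α β ζ η n) (i : Fin n) : Set V := ⋃ k, T.A i k

/-- `H(𝒯) = H_1 ∪ ⋯ ∪ H_n`. -/
def Hall (T : TemplateArray G α β ζ η n) : Set V := ⋃ i, T.Hs i

/-- `Y(𝒯) = Y_1 ∪ ⋯ ∪ Y_n`. -/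
def Yall (T : TemplateArray G α β ζ η n) : Set V := ⋃ i, T.Y i

/-- `Z(𝒯) = H(𝒯) \ Y(𝒯)`. -/
def Zall (T : TemplateArray G α β ζ η n) : Set V := T.Hall \ T.Yall

/-- `V(𝒯) = H(𝒯) ∪ U(𝒯)`. -/
def Vall (T : TemplateArray G α β ζ η n) : Set V := T.Hall ∪ T.U

/-- The template array is 1-cleaned: no vertex of `V(𝒯)` is dense to any `Y_i`. -/
def Cleaned1 (T : TemplateArray G α β ζ η n) : Prop :=
  ∀ i : Fin n, ∀ v ∈ T.Vall, ¬ DenseTo G α (T.A i) v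

/-- The template array is 2-cleaned. -/
def Cleaned2 (T : TemplateArray G α β ζ η n) : Prop :=
  T.Cleaned1 ∧
  (∀ i j : Fin n, i ≠ j → ∀ u ∈ T.Hs i, ∀ w ∈ T.Hs j, ¬ G.Adj u w) ∧
  (∀ i : Fin n, ∀ u ∈ T.Hs i \ T.Y i, ∀ w ∈ T.Hs i \ T.Y i, ¬ G.Adj u w)

/-- A privatization for the template array. -/
def Privatization (T : TemplateArray G α β ζ η n) (δ τ : ℕ) (P : Set V) : Prop :=
  P ⊆ T.U ∧
  (∃ M : Fin (δ * τ) → Set V, (⋃ i, M i) = P ∧ ∀ i, MatchingCovered G (M i)) ∧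
  (∀ v ∈ P, (T.Zall ∩ G.neighborSet v).encard = 1 ∧ ∀ y ∈ T.Yall, ¬ G.Adj v y) ∧
  (∀ z ∈ T.Zall, (P ∩ G.neighborSet z).encard = ((δ * τ : ℕ) : ℕ∞))

/-- `B` is a shadowing of the template array. -/
def Shadowing (T : TemplateArray G α β ζ η n) (B : Fin n → Set V) : Prop :=
  (∀ i, B i ⊆ T.U) ∧
  (∀ i j, i ≠ j → Disjoint (B i) (B j)) ∧
  (⋃ i, B i) = T.U ∧
  (∀ i, ∀ v ∈ B i, ∃ u ∈ T.Hs i, G.Adj v u)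

/-- The shadowing `B` has degree at most `s` relative to `X`. -/
def DegreeLeRel (T : TemplateArray G α β ζ η n) (B : Fin n → Set V) (s : ℕ) (X : Set V) :
    Prop :=
  ∀ v ∈ T.Vall, ({i : Fin n | ∃ u ∈ B i ∩ X, G.Adj v u}).encard ≤ (s : ℕ∞)

/-- `(u, v, P)` is a daisy with root `u`, eye `v` and petal set `P`, with respect to the
template array and the shadowing `B`. -/
def IsDaisy (T : TemplateArray G α β ζ η n) (δ : ℕ) (B : Fin n → Set V)
    (u v : V) (P : Set V) : Prop :=
  (∃ i, u ∈ T.Hs i ∧ ∃ j, j ≠ i ∧ P ⊆ B j) ∧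
  v ∈ T.U ∧
  P.encard = (δ : ℕ∞) ∧
  u ∉ P ∧ v ∉ P ∧ u ≠ v ∧
  G.Adj u v ∧
  (∀ p ∈ P, G.Adj v p) ∧
  (∀ p ∈ P, ¬ G.Adj u p) ∧
  (∀ p ∈ P, ∀ q ∈ P, ¬ G.Adj p q)

/-- `{(u j, v j, P j) : j ∈ J}` is a bunch of daisies with all roots in `Hs i`. -/
def IsBunch (T : TemplateArray G α β ζ η n) (δ : ℕ) (B : Fin n → Set V) (i : Fin n)
    (J : Set (Fin n)) (u v : Fin n → V) (P : Fin n → Set V) : Prop :=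
  i ∉ J ∧
  (∀ j ∈ J, T.IsDaisy δ B (u j) (v j) (P j)) ∧
  (∀ j ∈ J, u j ∈ T.Hs i) ∧
  (∀ j ∈ J, P j ⊆ B j) ∧
  (∀ j ∈ J, ∀ j' ∈ J, j ≠ j' → Disjoint (P j ∪ {v j}) (P j' ∪ {v j'})) ∧
  (∀ j ∈ J, ∀ j' ∈ J, j ≠ j' → ∀ x ∈ P j ∪ {v j}, ∀ y ∈ P j' ∪ {v j'}, ¬ G.Adj x y) ∧
  (∀ j ∈ J, ∀ j' ∈ J, j ≠ j' → ∀ p ∈ P j', ¬ G.Adj (u j) p)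

end TemplateArray

/-!
A vertex `w ∈ V(𝒯)` outside `H_i` has fewer than `η` neighbours in each part of `Y_i` (it is
neither dense nor mixed there, or it has no neighbour in `Y_i` at all). Since `ζ ≥ η + δ`, every
neighbour of `w` in `Y_i` is then the stem of a `(1,δ)`-broom and of a `(2,δ)`-broom with handle
`w` inside `Y_i`; as the cores are pairwise disjoint and anticomplete, `w` sees fewer than `2δ`
of them, or `G` contains `T(δ)`.

So `v` sees fewer than `2δ` cores, and lies in at most one `H_i`. For each other index with a
neighbour of `v` in `H_i`, pick such a neighbour `h_i`; all of them lie in `N²[v]`, so a colour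
class of a `τ`-colouring of `N²[v]` keeps `4δ²` pairwise non-adjacent ones. Each `h_j` sees fewer
than `2δ` earlier cores, so greedily `2δ` of them see no earlier core, and by the template
sequence axioms none sees a later one. These `2δ` stems give `T(δ)` with handle `v`: a stem is
`η`-mixed, hence has `δ` neighbours in one part of its core (a `(1,δ)`-broom), and is not dense,
hence misses many vertices of some part (a `(2,δ)`-broom).
-/

open Set Function Finset

theorem Set.exists_injective_fin_of_le_encard {α : Type*} {s : Set α} {d : ℕ}
    (h : (d : ℕ∞) ≤ s.encard) : ∃ l : Fin d → α, Injective l ∧ ∀ m, l m ∈ s := by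
  obtain ⟨e, -⟩ := Fin.Embedding.exists_embedding_disjoint_range_of_add_le_ENat_card
    (α := s) (s := ∅) (by simpa [← Set.encard_coe_eq_coe_finsetCard] using h)
  exact ⟨fun m => e m, fun a b hab => e.injective (Subtype.ext hab), fun m => (e m).2⟩

theorem Set.le_encard_sdiff_of_encard_inter_lt {α : Type*} {A X : Set α} {a e d : ℕ}
    (hA : A.encard = a) (hX : (A ∩ X).encard < e) (h : d + e ≤ a + 1) :
    (d : ℕ∞) ≤ (A \ X).encard := by
  have hsum := (Set.encard_sdiff_add_encard_inter A X).trans hA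
  have hfin : (A \ X).encard ≠ ⊤ := fun htop => by simp [htop] at hsum
  lift (A \ X).encard to ℕ using hfin with x
  lift (A ∩ X).encard to ℕ using ne_top_of_lt hX with y
  norm_cast at hsum hX ⊢
  omega

theorem Finset.exists_injective_mem_of_card_le {ι α : Type*} [Fintype ι] (s : Finset α)
    (h : Fintype.card ι ≤ #s) : ∃ f : ι → α, Injective f ∧ ∀ i, f i ∈ s := by
  obtain ⟨e⟩ := Function.Embedding.nonempty_of_card_le (α := ι) (β := s) (by simpa using h)
  exact ⟨fun i => e i, fun a b hab => e.injective (Subtype.ext hab), fun i => (e i).2⟩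

theorem Finset.exists_subset_card_eq_not_rel_of_card_predecessors_le {α : Type*}
    [LinearOrder α] (r : α → α → Prop) [DecidableRel r] (S : Finset α) {d k : ℕ}
    (hr : ∀ j ∈ S, #{i ∈ S | i < j ∧ r i j} ≤ d) (hS : (d + 1) * k ≤ #S) :
    ∃ J ⊆ S, #J = k ∧ ∀ i ∈ J, ∀ j ∈ J, i < j → ¬ r i j := by
  induction k generalizing S with
  | zero => exact ⟨∅, empty_subset _, rfl, by simp⟩
  | succ k ih =>
    have hne : S.Nonempty := card_pos.mp (by nlinarith)
    set j := S.max' hne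
    have hj : j ∈ S := S.max'_mem hne
    set S' := {i ∈ S.erase j | ¬ r i j}
    have hS'S : S' ⊆ S := (filter_subset _ _).trans (erase_subset _ _)
    have hpred : {i ∈ S.erase j | r i j} ⊆ {i ∈ S | i < j ∧ r i j} := by
      intro i hi
      simp only [mem_filter, mem_erase] at hi ⊢
      exact ⟨hi.1.2, lt_of_le_of_ne (S.le_max' i hi.1.2) hi.1.1, hi.2⟩
    have hsplit : #{i ∈ S.erase j | r i j} + #S' = #S - 1 := by
      rw [← card_erase_of_mem hj]
      exact card_filter_add_card_filter_not _
    have hS' : (d + 1) * k ≤ #S' := by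
      have := (card_le_card hpred).trans (hr j hj)
      rw [mul_add_one] at hS
      omega
    obtain ⟨J, hJS', hJ, hJr⟩ :=
      ih S' (fun i hi => (card_le_card (filter_subset_filter _ hS'S)).trans (hr i (hS'S hi))) hS'
    have hjJ : j ∉ J := fun h => by simpa using (mem_filter.mp (hJS' h)).1
    refine ⟨insert j J, insert_subset hj (hJS'.trans hS'S),
      by rw [card_insert_of_notMem hjJ, hJ], ?_⟩
    simp only [mem_insert]
    rintro i (rfl | hi) i' (rfl | hi') hlt
    · exact absurd hlt (lt_irrefl _)
    · exact absurd hlt (not_lt.mpr (S.le_max' _ (hS'S (hJS' hi'))))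
    · exact (mem_filter.mp (hJS' hi)).2
    · exact hJr i hi i' hi' hlt

theorem SimpleGraph.exists_subset_forall_not_adj_of_colorable {V ι : Type*}
    {G : SimpleGraph V} {X : Set V} {τ : ℕ} (hX : (G.induce X).Colorable τ) (f : ι → V)
    (hf : ∀ i, f i ∈ X) (s : Finset ι) {k : ℕ} (hk : τ * k < #s) :
    ∃ t ⊆ s, k ≤ #t ∧ ∀ i ∈ t, ∀ j ∈ t, ¬ G.Adj (f i) (f j) := by
  classical
  obtain ⟨C⟩ := hX
  let c : ι → Fin τ := fun i => C ⟨f i, hf i⟩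
  obtain ⟨i₀, -⟩ := card_pos.mp (Nat.zero_lt_of_lt hk)
  obtain ⟨col, -, hcol⟩ := exists_le_card_fiber_of_mul_le_card_of_maps_to (f := c)
    (fun i _ => mem_univ (c i)) ⟨c i₀, mem_univ _⟩ (by simpa using hk.le)
  refine ⟨{i ∈ s | c i = col}, filter_subset _ _, hcol, fun i hi j hj hadj => ?_⟩
  exact C.valid (G := G.induce X) (v := ⟨f i, hf i⟩) (w := ⟨f j, hf j⟩) hadj
    ((mem_filter.mp hi).2.trans (mem_filter.mp hj).2.symm)

/-- `br` sends the root part of `H` to `none` and every other vertex to its branch. It suffices to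
check `f` on pairs within a branch or meeting the root part, since distinct branches land in the
disjoint, mutually anticomplete sets `D s`. -/
theorem SimpleGraph.Embedding.nonempty_of_branches {W V ι : Type*} {H : SimpleGraph W}
    {G : SimpleGraph V} (f : W → V) (br : W → Option ι) (D : ι → Set V)
    (hD : Pairwise fun s s' => Disjoint (D s) (D s') ∧ ∀ x ∈ D s, ∀ y ∈ D s', ¬ G.Adj x y)
    (hf : ∀ a s, br a = some s → f a ∈ D s) (hroot : ∀ a, br a = none → ∀ s, f a ∉ D s)
    (hH : ∀ a b, H.Adj a b → br a = none ∨ br b = none ∨ br a = br b)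
    (hinj : ∀ a b, br a = br b → f a = f b → a = b)
    (hadj : ∀ a b, br a = none ∨ br a = br b → (G.Adj (f a) (f b) ↔ H.Adj a b)) :
    Nonempty (H ↪g G) := by
  have apart : ∀ a b s s', br a = some s → br b = some s' → s ≠ s' →
      f a ≠ f b ∧ ¬ G.Adj (f a) (f b) := fun a b s s' ha hb hss =>
    ⟨(hD hss).1.ne_of_mem (hf a s ha) (hf b s' hb), (hD hss).2 _ (hf a s ha) _ (hf b s' hb)⟩
  refine ⟨⟨⟨f, fun a b hab => ?_⟩, fun {a b} => ?_⟩⟩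
  · rcases ha : br a with _ | s <;> rcases hb : br b with _ | s'
    · exact hinj a b (ha.trans hb.symm) hab
    · exact absurd (hab ▸ hf b s' hb) (hroot a ha s')
    · exact absurd (hab ▸ hf a s ha) (hroot b hb s)
    · by_cases hss : s = s'
      · exact hinj a b (by rw [ha, hb, hss]) hab
      · exact absurd hab (apart a b s s' ha hb hss).1
  · by_cases hab : br a = none ∨ br a = br b
    · exact hadj a b hab
    by_cases hb : br b = none
    · exact (G.adj_comm _ _).trans ((hadj b a (Or.inl hb)).trans (H.adj_comm _ _))
    push Not at hab
    obtain ⟨s, ha⟩ := Option.ne_none_iff_exists'.mp hab.1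
    obtain ⟨s', hb⟩ := Option.ne_none_iff_exists'.mp hb
    have hss : s ≠ s' := fun h => hab.2 (by rw [ha, hb, h])
    refine iff_of_false (apart a b s s' ha hb hss).2 fun h => ?_
    rcases hH a b h with h | h | h <;> simp_all

section

variable {V : Type} {G : SimpleGraph V}

/-- The handle `w` is not required to differ from the other vertices, here or in `IsBroom2`:
`TdeltaFree.false_of_brooms` gets this from the sets `D`. -/
structure IsBroom1 (G : SimpleGraph V) (w s : V) {δ : ℕ} (l : Fin δ → V) : Prop where
  adj_handle : G.Adj w s
  adj_leaf : ∀ m, G.Adj s (l m)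
  not_adj_handle_leaf : ∀ m, ¬ G.Adj w (l m)
  injective : Injective l
  not_adj_leaves : ∀ m m', ¬ G.Adj (l m) (l m')

structure IsBroom2 (G : SimpleGraph V) (w s b : V) {δ : ℕ} (l : Fin δ → V) : Prop where
  adj_handle : G.Adj w s
  adj_mid : G.Adj s b
  adj_leaf : ∀ m, G.Adj b (l m)
  not_adj_handle_mid : ¬ G.Adj w b
  not_adj_handle_leaf : ∀ m, ¬ G.Adj w (l m)
  not_adj_stem_leaf : ∀ m, ¬ G.Adj s (l m)
  stem_ne_leaf : ∀ m, s ≠ l m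
  injective : Injective l
  not_adj_leaves : ∀ m m', ¬ G.Adj (l m) (l m')

def TVert.branch {δ : ℕ} : TVert δ → Option (Fin δ ⊕ Fin δ)
  | .handle => none
  | .stem1 t | .leaf1 t _ => some (.inl t)
  | .stem2 t | .end2 t | .leaf2 t _ => some (.inr t)

theorem TdeltaFree.false_of_brooms {δ : ℕ} (hfree : TdeltaFree δ G) (w : V)
    (D : Fin δ ⊕ Fin δ → Set V)
    (hD : Pairwise fun s s' => Disjoint (D s) (D s') ∧ ∀ x ∈ D s, ∀ y ∈ D s', ¬ G.Adj x y)
    (hw : ∀ s, w ∉ D s)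
    (h1 : ∀ t, ∃ s, ∃ l : Fin δ → V, IsBroom1 G w s l ∧ insert s (range l) ⊆ D (.inl t))
    (h2 : ∀ t, ∃ s b, ∃ l : Fin δ → V,
      IsBroom2 G w s b l ∧ insert s (insert b (range l)) ⊆ D (.inr t)) :
    False := by
  choose s1 l1 hB1 hD1 using h1
  choose s2 b2 l2 hB2 hD2 using h2
  simp only [insert_subset_iff, range_subset_iff] at hD1 hD2
  let f : TVert δ → V
    | .handle => w
    | .stem1 t => s1 t
    | .leaf1 t m => l1 t m
    | .stem2 t => s2 t
    | .end2 t => b2 t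
    | .leaf2 t m => l2 t m
  refine hfree.false
    (SimpleGraph.Embedding.nonempty_of_branches f TVert.branch D hD ?_ ?_ ?_ ?_ ?_).some
  · rintro (_ | _ | _ | _ | _ | _) s hs <;> cases hs <;> simp_all [f]
  · rintro (_ | _ | _ | _ | _ | _) hs <;> cases hs
    exact hw
  · rintro (_ | _ | _ | _ | _ | _) (_ | _ | _ | _ | _ | _) hab <;>
      simp_all [TGraph, TVert.branch]
  · rintro (_ | t | t | t | t | t) (_ | t' | t' | t' | t' | t') hbr <;>
      simp only [TVert.branch, reduceCtorEq, Option.some.injEq, Sum.inl.injEq,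
        Sum.inr.injEq] at hbr <;>
      (try subst hbr) <;>
      simp [f, (hB1 _).injective.eq_iff, (hB2 _).injective.eq_iff, ((hB1 _).adj_leaf _).ne,
        ((hB1 _).adj_leaf _).ne', (hB2 _).adj_mid.ne, (hB2 _).adj_mid.ne',
        ((hB2 _).adj_leaf _).ne, ((hB2 _).adj_leaf _).ne', (hB2 _).stem_ne_leaf,
        ((hB2 _).stem_ne_leaf _).symm]
  · rintro (_ | t | t | t | t | t) (_ | t' | t' | t' | t' | t') hbr <;>
      simp only [TVert.branch, reduceCtorEq, Option.some.injEq, Sum.inl.injEq, Sum.inr.injEq,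
        true_or, false_or] at hbr <;>
      (try subst hbr) <;>
      simp [f, TGraph, (hB1 _).adj_handle, (hB1 _).adj_leaf, (hB1 _).not_adj_handle_leaf,
        (hB1 _).not_adj_leaves, (hB2 _).adj_handle, (hB2 _).adj_mid, (hB2 _).adj_leaf,
        (hB2 _).not_adj_handle_mid, (hB2 _).not_adj_handle_leaf, (hB2 _).not_adj_stem_leaf,
        (hB2 _).not_adj_leaves, G.adj_comm (l1 _ _), G.adj_comm (b2 _) (s2 _),
        G.adj_comm (l2 _ _)]

namespace IsCoreParts

variable {α β ζ η δ : ℕ} {A : Fin β → Set V}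

theorem exists_leaves (hA : IsCoreParts G ζ A) (k : Fin β) {S : Set V} (hS : S ⊆ A k)
    (h : (δ : ℕ∞) ≤ S.encard) :
    ∃ l : Fin δ → V, Injective l ∧ (∀ m, l m ∈ S) ∧ ∀ m m', ¬ G.Adj (l m) (l m') := by
  obtain ⟨l, hl, hlS⟩ := exists_injective_fin_of_le_encard h
  exact ⟨l, hl, hlS, fun m m' => hA.2.2.1 k _ (hS (hlS m)) _ (hS (hlS m'))⟩

theorem exists_broom1_of_sparse (hA : IsCoreParts G ζ A) (hβ : 2 ≤ β) (hζ : η + δ ≤ ζ)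
    {w y : V} (hw : ∀ k, (A k ∩ G.neighborSet w).encard < η) (hy : y ∈ ⋃ k, A k)
    (hwy : G.Adj w y) : ∃ l : Fin δ → V, IsBroom1 G w y l ∧ range l ⊆ ⋃ k, A k := by
  have := Fin.nontrivial_iff_two_le.mpr hβ
  obtain ⟨κ, hκ⟩ := mem_iUnion.mp hy
  obtain ⟨r, hr⟩ := exists_ne κ
  obtain ⟨l, hl, hlA, hll⟩ := hA.exists_leaves (δ := δ) r sdiff_subset
    (le_encard_sdiff_of_encard_inter_lt (hA.1 r) (hw r) (by omega))
  exact ⟨l, ⟨hwy, fun m => hA.2.2.2 κ r hr.symm y hκ _ (hlA m).1, fun m => (hlA m).2, hl, hll⟩,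
    range_subset_iff.mpr fun m => mem_iUnion.mpr ⟨r, (hlA m).1⟩⟩

theorem exists_broom2_of_sparse (hA : IsCoreParts G ζ A) (hβ : 2 ≤ β) (hζ : η + δ ≤ ζ)
    {w y : V} (hw : ∀ k, (A k ∩ G.neighborSet w).encard < η) (hy : y ∈ ⋃ k, A k)
    (hwy : G.Adj w y) :
    ∃ b, ∃ l : Fin δ → V, IsBroom2 G w y b l ∧ insert b (range l) ⊆ ⋃ k, A k := by
  have := Fin.nontrivial_iff_two_le.mpr hβ
  obtain ⟨κ, hκ⟩ := mem_iUnion.mp hy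
  obtain ⟨r, hr⟩ := exists_ne κ
  obtain ⟨b, hbA, hwb⟩ := one_le_encard_iff_nonempty.mp
    (le_encard_sdiff_of_encard_inter_lt (d := 1) (hA.1 r) (hw r) (by omega))
  -- the leaves avoid `N(w)`, which contains the stem `y`
  obtain ⟨l, hl, hlA, hll⟩ := hA.exists_leaves (δ := δ) κ sdiff_subset
    (le_encard_sdiff_of_encard_inter_lt (hA.1 κ) (hw κ) (by omega))
  refine ⟨b, l, ⟨hwy, hA.2.2.2 κ r hr.symm y hκ b hbA, fun m => hA.2.2.2 r κ hr b hbA _ (hlA m).1,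
    hwb, fun m => (hlA m).2, fun m => hA.2.2.1 κ y hκ _ (hlA m).1,
    fun m h => (hlA m).2 (h ▸ hwy), hl, hll⟩, ?_⟩
  exact insert_subset (mem_iUnion.mpr ⟨r, hbA⟩)
    (range_subset_iff.mpr fun m => mem_iUnion.mpr ⟨κ, (hlA m).1⟩)

theorem exists_broom1_of_anticomplete (hA : IsCoreParts G ζ A) {w h : V} {k : Fin β}
    (hk : (δ : ℕ∞) ≤ (A k ∩ G.neighborSet h).encard) (hwh : G.Adj w h)
    (hw : ∀ y ∈ ⋃ k, A k, ¬ G.Adj w y) :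
    ∃ l : Fin δ → V, IsBroom1 G w h l ∧ range l ⊆ ⋃ k, A k := by
  obtain ⟨l, hl, hlA, hll⟩ := hA.exists_leaves k inter_subset_left hk
  have hlY : range l ⊆ ⋃ k, A k := range_subset_iff.mpr fun m => mem_iUnion.mpr ⟨k, (hlA m).1⟩
  exact ⟨l, ⟨hwh, fun m => (hlA m).2, fun m => hw _ (hlY (mem_range_self m)), hl, hll⟩, hlY⟩

theorem exists_part_of_not_denseTo (hA : IsCoreParts G ζ A) (hβ : 2 ≤ β) (hζ : α + δ ≤ ζ)
    {h : V} (hhY : h ∉ ⋃ k, A k) (hnd : ¬ DenseTo G α A h) (hh : ∃ y ∈ ⋃ k, A k, G.Adj h y) :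
    ∃ r, ∃ b ∈ ⋃ k, A k, b ∉ A r ∧ G.Adj h b ∧ (δ : ℕ∞) ≤ (A r \ G.neighborSet h).encard := by
  obtain ⟨p, hp⟩ : ∃ p, (A p ∩ G.neighborSet h).encard < α := by
    by_contra! hc
    exact hnd ⟨hhY, hc⟩
  by_cases hout : ∃ b ∈ ⋃ k, A k, b ∉ A p ∧ G.Adj h b
  · obtain ⟨b, hbY, hbp, hhb⟩ := hout
    exact ⟨p, b, hbY, hbp, hhb, le_encard_sdiff_of_encard_inter_lt (hA.1 p) hp (by omega)⟩
  push Not at hout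
  have := Fin.nontrivial_iff_two_le.mpr hβ
  obtain ⟨y, hyY, hhy⟩ := hh
  obtain ⟨r, hr⟩ := exists_ne p
  have hyp : y ∈ A p := not_not.mp fun hyp => hout y hyY hyp hhy
  refine ⟨r, y, hyY, fun hyr => (hA.2.1 r p hr).ne_of_mem hyr hyp rfl, hhy, ?_⟩
  have hnbr : A r \ G.neighborSet h = A r := sdiff_eq_left.mpr <| disjoint_left.mpr
    fun x hxr hhx => (hA.2.1 r p hr).ne_of_mem hxr (not_not.mp fun hxp =>
      hout x (mem_iUnion.mpr ⟨r, hxr⟩) hxp hhx) rfl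
  rw [hnbr, hA.1 r]
  exact_mod_cast (by omega : δ ≤ ζ)

theorem exists_broom2_of_anticomplete (hA : IsCoreParts G ζ A) (hβ : 2 ≤ β) (hζ : α + δ ≤ ζ)
    {w h : V} (hhY : h ∉ ⋃ k, A k) (hnd : ¬ DenseTo G α A h) (hh : ∃ y ∈ ⋃ k, A k, G.Adj h y)
    (hwh : G.Adj w h) (hw : ∀ y ∈ ⋃ k, A k, ¬ G.Adj w y) :
    ∃ b, ∃ l : Fin δ → V, IsBroom2 G w h b l ∧ insert b (range l) ⊆ ⋃ k, A k := by
  obtain ⟨r, b, hbY, hbr, hhb, hpool⟩ := hA.exists_part_of_not_denseTo hβ hζ hhY hnd hh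
  obtain ⟨q, hbq⟩ := mem_iUnion.mp hbY
  have hqr : q ≠ r := fun e => hbr (e ▸ hbq)
  obtain ⟨l, hl, hlA, hll⟩ := hA.exists_leaves r sdiff_subset hpool
  have hlY : range l ⊆ ⋃ k, A k := range_subset_iff.mpr fun m => mem_iUnion.mpr ⟨r, (hlA m).1⟩
  refine ⟨b, l, ⟨hwh, hhb, fun m => hA.2.2.2 q r hqr b hbq _ (hlA m).1, hw b hbY,
    fun m => hw _ (hlY (mem_range_self m)), fun m => (hlA m).2,
    fun m e => hhY (e ▸ hlY (mem_range_self m)), hl, hll⟩, insert_subset hbY hlY⟩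

end IsCoreParts

namespace TemplateArray

variable {α β ζ η δ n : ℕ} (T : TemplateArray G α β ζ η n)

theorem Y_subset_Hs (i : Fin n) : T.Y i ⊆ T.Hs i := T.core_subset i

theorem mem_Vall_of_mem_Hs {i : Fin n} {x : V} (hx : x ∈ T.Hs i) : x ∈ T.Vall :=
  Or.inl (mem_iUnion.mpr ⟨i, hx⟩)

theorem not_adj_of_mem_Y {i j : Fin n} (hij : i ≠ j) {x y : V} (hx : x ∈ T.Y i)
    (hy : y ∈ T.Y j) : ¬ G.Adj x y := by
  rcases hij.lt_or_gt with h | h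
  · exact T.no_edge i j h x (T.Y_subset_Hs i hx) y hy
  · exact fun hxy => T.no_edge j i h y (T.Y_subset_Hs j hy) x hx hxy.symm

variable {T}

theorem encard_inter_neighborSet_lt (hT : T.Cleaned1) (hη : 1 ≤ η) {w : V} (hw : w ∈ T.Vall)
    {i : Fin n} (hwi : w ∉ T.Hs i) (k : Fin β) :
    (T.A i k ∩ G.neighborSet w).encard < η := by
  by_contra! hk
  have hmixed : MixedOn G α η (T.A i) w := ⟨hT i w hw, k, hk⟩
  rcases hw with hwH | hwU
  · obtain ⟨j, hj⟩ := mem_iUnion.mp hwH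
    rcases (show i ≠ j by rintro rfl; exact hwi hj).lt_or_gt with hij | hji
    · exact T.not_mixed i j hij w hj hmixed
    · obtain ⟨y, hy, hwy⟩ := one_le_encard_iff_nonempty.mp ((Nat.one_le_cast.mpr hη).trans hk)
      exact T.no_edge j i hji w hj y (mem_iUnion.mpr ⟨k, hy⟩) hwy
  · exact T.U_not_mixed w hwU i hmixed

theorem card_lt_of_forall_adj_Y (hT : T.Cleaned1) (hfree : TdeltaFree δ G) (hβ : 2 ≤ β)
    (hζ : η + δ ≤ ζ) (hη : 1 ≤ η) {w : V} (hw : w ∈ T.Vall) (F : Finset (Fin n))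
    (hF : ∀ i ∈ F, w ∉ T.Hs i ∧ ∃ y ∈ T.Y i, G.Adj w y) : #F < 2 * δ := by
  by_contra! hF2
  obtain ⟨I, hI, hIF⟩ := F.exists_injective_mem_of_card_le (ι := Fin δ ⊕ Fin δ)
    (by simpa [two_mul] using hF2)
  have hsparse := fun s => T.encard_inter_neighborSet_lt hT hη hw (hF _ (hIF s)).1
  refine hfree.false_of_brooms w (fun s => T.Y (I s)) (fun s s' hss => ⟨?_, fun x hx y hy =>
    T.not_adj_of_mem_Y (hI.ne hss) hx hy⟩) (fun s hs => (hF _ (hIF s)).1 (T.Y_subset_Hs _ hs))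
    (fun t => ?_) (fun t => ?_)
  · exact (T.H_disj _ _ (hI.ne hss)).mono (T.Y_subset_Hs _) (T.Y_subset_Hs _)
  · obtain ⟨y, hy, hwy⟩ := (hF _ (hIF (.inl t))).2
    obtain ⟨l, hl, hlY⟩ := (T.core _).exists_broom1_of_sparse hβ hζ (hsparse _) hy hwy
    exact ⟨y, l, hl, insert_subset hy hlY⟩
  · obtain ⟨y, hy, hwy⟩ := (hF _ (hIF (.inr t))).2
    obtain ⟨b, l, hl, hlY⟩ := (T.core _).exists_broom2_of_sparse hβ hζ (hsparse _) hy hwy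
    exact ⟨y, b, l, hl, insert_subset hy hlY⟩

open Classical in
theorem card_le_card_filter_anticomplete_add (hT : T.Cleaned1) (hfree : TdeltaFree δ G)
    (hβ : 2 ≤ β) (hζ : η + δ ≤ ζ) (hη : 1 ≤ η) {v : V} (hv : v ∈ T.Vall) (S : Finset (Fin n)) :
    #S ≤ #{i ∈ S | v ∉ T.Hs i ∧ ∀ y ∈ T.Y i, ¬ G.Adj v y} + 2 * δ := by
  have hcover : S ⊆ {i ∈ S | v ∉ T.Hs i ∧ ∀ y ∈ T.Y i, ¬ G.Adj v y} ∪
      ({i ∈ S | v ∈ T.Hs i} ∪ {i ∈ S | v ∉ T.Hs i ∧ ∃ y ∈ T.Y i, G.Adj v y}) := by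
    intro i hi
    by_cases hvi : v ∈ T.Hs i <;> by_cases hY : ∃ y ∈ T.Y i, G.Adj v y <;> simp_all
  have hone : #{i ∈ S | v ∈ T.Hs i} ≤ 1 := card_le_one.mpr fun i hi j hj => by
    by_contra hij
    exact (T.H_disj i j hij).ne_of_mem (mem_filter.mp hi).2 (mem_filter.mp hj).2 rfl
  have hfew := card_lt_of_forall_adj_Y hT hfree hβ hζ hη hv
    {i ∈ S | v ∉ T.Hs i ∧ ∃ y ∈ T.Y i, G.Adj v y} fun i hi => (mem_filter.mp hi).2
  grw [Finset.card_le_card hcover, Finset.card_union_le, Finset.card_union_le]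
  omega

/-- Half of the stems `h i` carry `(1,δ)`-brooms and half `(2,δ)`-brooms inside their cores, all
with handle `v`. -/
theorem false_of_stems (hT : T.Cleaned1) (hfree : TdeltaFree δ G) (hβ : 2 ≤ β) (hη : δ ≤ η)
    (hη1 : 1 ≤ η) (hζ : α + δ ≤ ζ) {v : V} (h : Fin n → V) (J : Finset (Fin n))
    (hJ : 2 * δ ≤ #J) (hv : ∀ i ∈ J, v ∉ T.Hs i ∧ ∀ y ∈ T.Y i, ¬ G.Adj v y)
    (hh : ∀ i ∈ J, h i ∈ T.Hs i ∧ G.Adj v (h i))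
    (hindep : ∀ i ∈ J, ∀ j ∈ J, ¬ G.Adj (h i) (h j))
    (hY : ∀ i ∈ J, ∀ j ∈ J, i < j → ∀ y ∈ T.Y i, ¬ G.Adj (h j) y) : False := by
  obtain ⟨I, hI, hIJ⟩ := J.exists_injective_mem_of_card_le (ι := Fin δ ⊕ Fin δ)
    (by simpa [two_mul] using hJ)
  have hsep : ∀ s s', s ≠ s' → ∀ y ∈ T.Y (I s), ¬ G.Adj (h (I s')) y := fun s s' hss y hy =>
    (hI.ne hss).lt_or_gt.elim (fun hlt => hY _ (hIJ s) _ (hIJ s') hlt y hy)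
      (fun hgt => T.no_edge _ _ hgt _ (hh _ (hIJ s')).1 y hy)
  have hD : ∀ s, insert (h (I s)) (T.Y (I s)) ⊆ T.Hs (I s) := fun s =>
    insert_subset (hh _ (hIJ s)).1 (T.Y_subset_Hs _)
  have hstemY : ∀ s, h (I s) ∉ T.Y (I s) := fun s hY => (hv _ (hIJ s)).2 _ hY (hh _ (hIJ s)).2
  refine hfree.false_of_brooms v (fun s => insert (h (I s)) (T.Y (I s)))
    (fun s s' hss => ⟨(T.H_disj _ _ (hI.ne hss)).mono (hD s) (hD s'), ?_⟩) (fun s hs => ?_)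
    (fun t => ?_) (fun t => ?_)
  · rintro x (rfl | hx) y (rfl | hy)
    · exact hindep _ (hIJ s) _ (hIJ s')
    · exact hsep s' s hss.symm y hy
    · exact fun hxy => hsep s s' hss x hx hxy.symm
    · exact T.not_adj_of_mem_Y (hI.ne hss) hx hy
  · rcases hs with hs | hs
    · exact (hh _ (hIJ s)).2.ne hs
    · exact (hv _ (hIJ s)).1 (T.Y_subset_Hs _ hs)
  · obtain ⟨k, hk⟩ := (T.mixed _ _ (hh _ (hIJ (.inl t))).1).2
    obtain ⟨l, hl, hlY⟩ := (T.core _).exists_broom1_of_anticomplete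
      ((Nat.cast_le.mpr hη).trans hk) (hh _ (hIJ _)).2 (hv _ (hIJ _)).2
    exact ⟨_, l, hl, insert_subset_insert hlY⟩
  · have hmem := (hh _ (hIJ (.inr t))).1
    obtain ⟨k, hk⟩ := (T.mixed _ _ hmem).2
    obtain ⟨y, hy, hhy⟩ := one_le_encard_iff_nonempty.mp ((Nat.one_le_cast.mpr hη1).trans hk)
    obtain ⟨b, l, hl, hlY⟩ := (T.core _).exists_broom2_of_anticomplete hβ hζ (hstemY _)
      (hT _ _ (T.mem_Vall_of_mem_Hs hmem)) ⟨y, mem_iUnion.mpr ⟨k, hy⟩, hhy⟩ (hh _ (hIJ _)).2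
      (hv _ (hIJ _)).2
    exact ⟨_, b, l, hl, insert_subset_insert hlY⟩

theorem card_le_of_forall_anticomplete {τ : ℕ} (hT : T.Cleaned1) (hfree : TdeltaFree δ G)
    (hχ : ChiTwoLe G τ) (hβ : 2 ≤ β) (hη : δ ≤ η) (hδ : 1 ≤ δ) (hζη : η + δ ≤ ζ)
    (hζα : α + δ ≤ ζ) {v : V} (S : Finset (Fin n))
    (hS : ∀ i ∈ S, (∃ x ∈ T.Hs i, G.Adj v x) ∧ v ∉ T.Hs i ∧ ∀ y ∈ T.Y i, ¬ G.Adj v y) :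
    #S ≤ τ * (2 * δ * (2 * δ)) := by
  classical
  by_contra! hSτ
  have hη1 : 1 ≤ η := hδ.trans hη
  have hstem : ∀ i, ∃ x ∈ Ball2 G v, i ∈ S → x ∈ T.Hs i ∧ G.Adj v x := fun i => by
    by_cases hi : i ∈ S
    · obtain ⟨x, hx, hvx⟩ := (hS i hi).1
      exact ⟨x, Or.inr (Or.inl hvx), fun _ => ⟨hx, hvx⟩⟩
    · exact ⟨v, Or.inl rfl, fun h => absurd h hi⟩
  choose h hball hh using hstem
  obtain ⟨S1, hS1, hS1card, hindep⟩ := SimpleGraph.exists_subset_forall_not_adj_of_colorable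
    (SimpleGraph.chromaticNumber_le_iff_colorable.mp (hχ v)) h hball S hSτ
  have hpred : ∀ j ∈ S1, #{i ∈ S1 | i < j ∧ ∃ y ∈ T.Y i, G.Adj (h j) y} ≤ 2 * δ - 1 := by
    intro j hj
    have hhj := (hh j (hS1 hj)).1
    have := T.card_lt_of_forall_adj_Y hT hfree hβ hζη hη1 (T.mem_Vall_of_mem_Hs hhj)
      {i ∈ S1 | i < j ∧ ∃ y ∈ T.Y i, G.Adj (h j) y} fun i hi =>
        ⟨fun hhi => (T.H_disj i j (mem_filter.mp hi).2.1.ne).ne_of_mem hhi hhj rfl,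
          (mem_filter.mp hi).2.2⟩
    omega
  obtain ⟨J, hJS1, hJ, hJY⟩ := S1.exists_subset_card_eq_not_rel_of_card_predecessors_le
    (fun i j => ∃ y ∈ T.Y i, G.Adj (h j) y) hpred (k := 2 * δ)
    (by rwa [Nat.sub_add_cancel (by omega)])
  exact T.false_of_stems hT hfree hβ hη hη1 hζα h J hJ.ge
    (fun i hi => (hS i (hS1 (hJS1 hi))).2) (fun i hi => hh i (hS1 (hJS1 hi)))
    (fun i hi j hj => hindep i (hJS1 hi) j (hJS1 hj))
    (fun i hi j hj hij y hy hjy => hJY i hi j hj hij ⟨y, hy, hjy⟩)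

end TemplateArray

end

theorem statement10_general (τ α δ β ζ η : ℕ) (hδ : 1 ≤ δ) (hβ : 2 ≤ β)
    (θ : ℕ → ℕ) (hη : δ ≤ η) (hζ : max η α + δ ≤ ζ)
    (V : Type) (G : SimpleGraph V) (hG : Conditions τ α δ β θ G)
    (n : ℕ) (T : TemplateArray G α β ζ η n) (hT : T.Cleaned1)
    (v : V) (hv : v ∈ T.Vall) :
    {i : Fin n | ∃ h ∈ T.Hs i, G.Adj v h}.encard
      < (((2 * δ * τ + 1) * (2 * δ + 1) : ℕ) : ℕ∞) := by
  classical
  obtain ⟨hfree, hχ, -, -, -⟩ := hG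
  have hζη : η + δ ≤ ζ := le_trans (by omega) hζ
  set S : Finset (Fin n) := {i | ∃ h ∈ T.Hs i, G.Adj v h}
  rw [show {i : Fin n | ∃ h ∈ T.Hs i, G.Adj v h} = S by simp [S], encard_coe_eq_coe_finsetCard,
    Nat.cast_lt]
  have hfar := T.card_le_of_forall_anticomplete hT hfree hχ hβ hη hδ hζη (le_trans (by omega) hζ)
    {i ∈ S | v ∉ T.Hs i ∧ ∀ y ∈ T.Y i, ¬ G.Adj v y} fun i hi => by simpa [S] using hi
  have hnear := T.card_le_card_filter_anticomplete_add hT hfree hβ hζη (hδ.trans hη) hv S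
  nlinarith

/-- for η ≥ δ, ζ ≥ max(η,α)+δ, G satisfying (i)–(v), and a 1-cleaned
(ζ,η)-template array 𝒯 in G, each v ∈ V(𝒯) has a neighbour in H_i for fewer than
γ = (2δτ+1)(2δ+1) values of i. -/
theorem statement10 (τ α δ β ζ η : ℕ) (hα : 1 ≤ α) (hδ : 1 ≤ δ) (hβ : 2 ≤ β)
    (θ : ℕ → ℕ) (hθ : Monotone θ) (hη : δ ≤ η) (hζ : max η α + δ ≤ ζ)
    (V : Type) (G : SimpleGraph V) (hG : Conditions τ α δ β θ G)
    (n : ℕ) (T : TemplateArray G α β ζ η n) (hT : T.Cleaned1)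
    (v : V) (hv : v ∈ T.Vall) :
    {i : Fin n | ∃ h ∈ T.Hs i, G.Adj v h}.encard
      < (((2 * δ * τ + 1) * (2 * δ + 1) : ℕ) : ℕ∞) :=
  statement10_general τ α δ β ζ η hδ hβ θ hη hζ V G hG n T hT v hv
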